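/- Let d ≥ 1, let Σ ∈ ℝ^{d×d} be symmetric positive definite, let B ≥ 0, let θ̂ ∈ ℝ^d, let (X, 𝒜, ν) be a measure space, and let h : X → ℝ^d be measurable such that every component x ↦ h(x)_i is ν-integrable and x ↦ √(h(x)ᵀ Σ⁻¹ h(x)) is ν-integrable. Then ∫ (min {θᵀh(x) : θ ∈ ℝ^d, (θ − θ̂)ᵀ Σ (θ − θ̂) ≤ B}) dν(x) = ∫ θ̂ᵀh(x) dν(x) − √B · ∫ √(h(x)ᵀ Σ⁻¹ h(x)) dν(x). -/

import Mathlib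

open Matrix MeasureTheory

section Aux

variable {d : ℕ}

/-- Cauchy–Schwarz for dot products: `-(a ⬝ᵥ b) ≤ √(a⬝ᵥa) * √(b⬝ᵥb)`. -/
lemma neg_dotProduct_le_sqrt (a b : Fin d → ℝ) :
    -(a ⬝ᵥ b) ≤ Real.sqrt (a ⬝ᵥ a) * Real.sqrt (b ⬝ᵥ b) := by
  have := Real.sum_mul_le_sqrt_mul_sqrt Finset.univ (fun i => -a i) b
  simpa [dotProduct, sq, neg_mul, Finset.sum_neg_distrib, mul_self_eq_zero] using this

open scoped MatrixOrder in
lemma key_isLeast (M : Matrix (Fin d) (Fin d) ℝ) (hM : M.PosDef)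
    (B : ℝ) (hB : 0 ≤ B) (θhat v : Fin d → ℝ) :
    IsLeast {r : ℝ | ∃ θ : Fin d → ℝ,
        (θ - θhat) ⬝ᵥ (M *ᵥ (θ - θhat)) ≤ B ∧ r = θ ⬝ᵥ v}
      (θhat ⬝ᵥ v - Real.sqrt B * Real.sqrt (v ⬝ᵥ (M⁻¹ *ᵥ v))) := by
  classical
  set S := CFC.sqrt M with hS
  have hSsym : Sᵀ = S := (CFC.sqrt_nonneg M).posSemidef.1
  have hSS : S * S = M := CFC.sqrt_mul_sqrt_self M hM.posSemidef.nonneg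
  have hSdet : IsUnit S.det := by
    have hdet : S.det * S.det = M.det := by rw [← Matrix.det_mul, hSS]
    exact isUnit_of_mul_isUnit_left (hdet ▸ hM.det_pos.ne'.isUnit)
  have hMdet : IsUnit M.det := hM.det_pos.ne'.isUnit
  have hdot : ∀ u w : Fin d → ℝ, u ⬝ᵥ (S *ᵥ w) = (S *ᵥ u) ⬝ᵥ w := by
    intro u w
    rw [Matrix.dotProduct_mulVec, ← Matrix.mulVec_transpose, hSsym]
  have hMinv : M⁻¹ = S⁻¹ * S⁻¹ := by
    rw [← hSS, Matrix.mul_inv_rev]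
  have hSinvsym : (S⁻¹)ᵀ = S⁻¹ := by rw [Matrix.transpose_nonsing_inv, hSsym]
  have hdotinv : ∀ u w : Fin d → ℝ, u ⬝ᵥ (S⁻¹ *ᵥ w) = (S⁻¹ *ᵥ u) ⬝ᵥ w := by
    intro u w
    rw [Matrix.dotProduct_mulVec, ← Matrix.mulVec_transpose, hSinvsym]
  set q : ℝ := v ⬝ᵥ (M⁻¹ *ᵥ v) with hqdef
  have hq : q = (S⁻¹ *ᵥ v) ⬝ᵥ (S⁻¹ *ᵥ v) := by
    rw [hqdef, hMinv, ← Matrix.mulVec_mulVec, hdotinv]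
  have hMu : ∀ u : Fin d → ℝ, u ⬝ᵥ (M *ᵥ u) = (S *ᵥ u) ⬝ᵥ (S *ᵥ u) := by
    intro u
    rw [← hSS, ← Matrix.mulVec_mulVec, hdot]
  have hrecon : v = S *ᵥ (S⁻¹ *ᵥ v) := by
    rw [Matrix.mulVec_mulVec, Matrix.mul_nonsing_inv _ hSdet, Matrix.one_mulVec]
  have hq0 : 0 ≤ q := by
    rw [hq]; exact Finset.sum_nonneg fun i _ => mul_self_nonneg _
  constructor
  · -- membership: attained
    rcases eq_or_lt_of_le hq0 with hq0' | hqpos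
    · refine ⟨θhat, by simpa using hB, ?_⟩
      rw [← hq0', Real.sqrt_zero, mul_zero, sub_zero]
    · have hsq : Real.sqrt q > 0 := Real.sqrt_pos.mpr hqpos
      set c : ℝ := Real.sqrt B / Real.sqrt q with hc
      have hMMinv : (M⁻¹ *ᵥ v) ⬝ᵥ (M *ᵥ (M⁻¹ *ᵥ v)) = q := by
        rw [Matrix.mulVec_mulVec, Matrix.mul_nonsing_inv _ hMdet, Matrix.one_mulVec,
          dotProduct_comm]
      have hvMinv : (M⁻¹ *ᵥ v) ⬝ᵥ v = q := by
        rw [dotProduct_comm]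
      refine ⟨θhat - c • (M⁻¹ *ᵥ v), ?_, ?_⟩
      · have h1 : (θhat - c • (M⁻¹ *ᵥ v)) - θhat = (-c) • (M⁻¹ *ᵥ v) := by
          rw [sub_sub_cancel_left, neg_smul]
        rw [h1, Matrix.mulVec_smul, smul_dotProduct, dotProduct_smul,
          hMMinv, smul_eq_mul, smul_eq_mul]
        have : -c * (-c * q) = c ^ 2 * q := by ring
        rw [this, hc, div_pow, Real.sq_sqrt hB, Real.sq_sqrt hq0,
          div_mul_cancel₀ _ hqpos.ne']
      · rw [sub_dotProduct, smul_dotProduct, hvMinv, smul_eq_mul, hc,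
          div_mul_eq_mul_div]
        congr 1
        rw [eq_div_iff hsq.ne', mul_assoc, Real.mul_self_sqrt hq0]
  · rintro r ⟨θ, hθ, rfl⟩
    have hCS : -((θ - θhat) ⬝ᵥ v) ≤ Real.sqrt B * Real.sqrt q := by
      have h1 : (θ - θhat) ⬝ᵥ v = (S *ᵥ (θ - θhat)) ⬝ᵥ (S⁻¹ *ᵥ v) := by
        conv_lhs => rw [hrecon, hdot]
      rw [h1]
      calc -((S *ᵥ (θ - θhat)) ⬝ᵥ (S⁻¹ *ᵥ v))
          ≤ Real.sqrt ((S *ᵥ (θ - θhat)) ⬝ᵥ (S *ᵥ (θ - θhat))) *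
            Real.sqrt ((S⁻¹ *ᵥ v) ⬝ᵥ (S⁻¹ *ᵥ v)) := neg_dotProduct_le_sqrt _ _
        _ ≤ Real.sqrt B * Real.sqrt q := by
            rw [← hq]
            gcongr
            rw [← hMu]; exact hθ
    have h2 : θ ⬝ᵥ v = θhat ⬝ᵥ v + (θ - θhat) ⬝ᵥ v := by
      rw [sub_dotProduct]; ring
    linarith

end Aux

/-- Equivalence of the pessimistic RL objective with the IBL-regularized
objective (Eqns. 26–27): the integral of the worst-case reward over the
confidence set equals the integral of the MLE reward minus `√B` times the
integral of the Mahalanobis penalty. -/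
theorem pessimistic_objective_eq_ibl
    (d : ℕ) (hd : 1 ≤ d)
    (M : Matrix (Fin d) (Fin d) ℝ) (hM : M.PosDef)
    (B : ℝ) (hB : 0 ≤ B)
    (θhat : Fin d → ℝ)
    (X : Type*) [MeasurableSpace X] (ν : Measure X)
    (h : X → Fin d → ℝ) (hmeas : Measurable h)
    (hint : ∀ i : Fin d, Integrable (fun x => h x i) ν)
    (hint' : Integrable (fun x => Real.sqrt (h x ⬝ᵥ (M⁻¹ *ᵥ h x))) ν) :
    ∫ x, sInf {r : ℝ | ∃ θ : Fin d → ℝ,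
        (θ - θhat) ⬝ᵥ (M *ᵥ (θ - θhat)) ≤ B ∧ r = θ ⬝ᵥ h x} ∂ν =
      ∫ x, θhat ⬝ᵥ h x ∂ν -
        Real.sqrt B * ∫ x, Real.sqrt (h x ⬝ᵥ (M⁻¹ *ᵥ h x)) ∂ν := by
  have hpt : ∀ x, sInf {r : ℝ | ∃ θ : Fin d → ℝ,
      (θ - θhat) ⬝ᵥ (M *ᵥ (θ - θhat)) ≤ B ∧ r = θ ⬝ᵥ h x}
      = θhat ⬝ᵥ h x - Real.sqrt B * Real.sqrt (h x ⬝ᵥ (M⁻¹ *ᵥ h x)) := fun x =>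
    (key_isLeast M hM B hB θhat (h x)).csInf_eq
  rw [show (fun x => sInf {r : ℝ | ∃ θ : Fin d → ℝ,
      (θ - θhat) ⬝ᵥ (M *ᵥ (θ - θhat)) ≤ B ∧ r = θ ⬝ᵥ h x})
      = fun x => θhat ⬝ᵥ h x - Real.sqrt B * Real.sqrt (h x ⬝ᵥ (M⁻¹ *ᵥ h x))
    from funext hpt]
  have hint1 : Integrable (fun x => θhat ⬝ᵥ h x) ν := by
    simp only [dotProduct]
    exact integrable_finset_sum _ fun i _ => (hint i).const_mul (θhat i)
  rw [integral_sub hint1 (hint'.const_mul _), integral_const_mul]
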